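/- arXiv:2209.01830 — 5 statements merged into one kernel-verified Lean document; each statement's English description precedes it below -/
import Mathlib

section
/- The sequence 0 ← ℤ ← X_0 ← X_1 ← X_2 ← X_3 ← X_4, where X_0 = ℤ[Q8]{a_0}, X_1 = ℤ[Q8]{b_1, b_2}, X_2 = ℤ[Q8]{c_1, c_2}, X_3 = ℤ[Q8]{e}, X_4 = ℤ[Q8]{a_1}, with augmentation a_0 ↦ 1 and differentials d(b_1) = (i-1)a_0, d(b_2) = (j-1)a_0, d(c_1) = (1+i)b_1 - (1+j)b_2, d(c_2) = (1+ij)b_1 + (i-1)b_2, d(e) = (i-1)c_1 - (ij-1)c_2, d(a_1) = (Σ_{g∈Q8} g)·e, is an exact sequence of ℤ[Q8]-modules. -/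
open QuaternionGroup

noncomputable section

/-- The integral group ring `ℤ[Q₈]`. -/
abbrev Q8Ring : Type := MonoidAlgebra ℤ (QuaternionGroup 2)

/-- The canonical inclusion `Q₈ → ℤ[Q₈]`. -/
def ιQ8 : QuaternionGroup 2 →* Q8Ring := MonoidAlgebra.of ℤ (QuaternionGroup 2)

/-- The element `i ∈ Q₈` inside `ℤ[Q₈]`. -/
def gi : Q8Ring := ιQ8 (a 1)

/-- The element `j ∈ Q₈` inside `ℤ[Q₈]`. -/
def gj : Q8Ring := ιQ8 (xa 0)

/-- Right multiplication by `c`, as a map of left `ℤ[Q₈]`-modules; this sends the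
generator of a free rank one module to `c`. -/
def mr (c : Q8Ring) : Q8Ring →ₗ[Q8Ring] Q8Ring := LinearMap.toSpanSingleton Q8Ring Q8Ring c

/-- `d₀ : X₁ = ℤ[Q₈]{b₁,b₂} → X₀ = ℤ[Q₈]{a₀}`, `b₁ ↦ (i-1)a₀`, `b₂ ↦ (j-1)a₀`. -/
def d0 : (Q8Ring × Q8Ring) →ₗ[Q8Ring] Q8Ring :=
  LinearMap.coprod (mr (gi - 1)) (mr (gj - 1))

/-- `d₁ : X₂ = ℤ[Q₈]{c₁,c₂} → X₁`, `c₁ ↦ (1+i)b₁ - (1+j)b₂`, `c₂ ↦ (1+ij)b₁ + (i-1)b₂`. -/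
def d1 : (Q8Ring × Q8Ring) →ₗ[Q8Ring] (Q8Ring × Q8Ring) :=
  (LinearMap.coprod (mr (1 + gi)) (mr (1 + gi * gj))).prod
    (LinearMap.coprod (mr (-(1 + gj))) (mr (gi - 1)))

/-- `d₂ : X₃ = ℤ[Q₈]{e} → X₂`, `e ↦ (i-1)c₁ - (ij-1)c₂`. -/
def d2 : Q8Ring →ₗ[Q8Ring] (Q8Ring × Q8Ring) :=
  (mr (gi - 1)).prod (mr (1 - gi * gj))

/-- `d₃ : X₄ = ℤ[Q₈]{a₁} → X₃`, `a₁ ↦ (Σ_{g ∈ Q₈} g)·e`. -/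
def d3 : Q8Ring →ₗ[Q8Ring] Q8Ring :=
  mr (∑ g : QuaternionGroup 2, ιQ8 g)

/-- The augmentation `ℤ[Q₈] → ℤ`, `Σ c_g g ↦ Σ c_g`, where `ℤ` carries the trivial
`Q₈`-action. -/
def aug : Q8Ring →ₐ[ℤ] ℤ := MonoidAlgebra.lift ℤ ℤ (QuaternionGroup 2) 1

/-!
The differentials compose to zero because of the relations `i² = j²`, `iji = j` and `N g = N`
for the norm element `N = ∑ g`. For exactness it suffices to give a contracting homotopy, i.e.
maps `s` in the opposite direction with `d s + s d = id`: a cycle `y` is then the boundary of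
`s y`. The homotopy only has to be `ℤ`-linear, so it can be prescribed freely on the `ℤ`-basis
`Q₈` of each `ℤ[Q₈]`, and `d s + s d = id` becomes a finite computation in the group ring.
-/

theorem LinearMap.exact_of_homotopy {R M N P : Type*} [Semiring R] [AddCommGroup M]
    [AddCommGroup N] [AddCommGroup P] [Module R M] [Module R N] [Module R P]
    {f : M →ₗ[R] N} {g : N →ₗ[R] P} (s : N →ₗ[R] M) (t : P →ₗ[R] N)
    (hst : f ∘ₗ s + t ∘ₗ g = LinearMap.id) (hgf : ∀ x, g (f x) = 0) : Function.Exact f g :=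
  fun y => ⟨fun hy => ⟨s y, by simpa [hy] using LinearMap.congr_fun hst y⟩,
    by rintro ⟨x, rfl⟩; exact hgf x⟩

lemma QuaternionGroup.eq_cases_two (g : QuaternionGroup 2) : g = a 0 ∨ g = a 1 ∨ g = a 2 ∨
    g = a 3 ∨ g = xa 0 ∨ g = xa 1 ∨ g = xa 2 ∨ g = xa 3 := by
  revert g; decide

lemma QuaternionGroup.sum_univ_two {M : Type*} [AddCommMonoid M] (f : QuaternionGroup 2 → M) :
    ∑ g, f g =
      f (a 0) + f (a 1) + f (a 2) + f (a 3) + f (xa 0) + f (xa 1) + f (xa 2) + f (xa 3) := by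
  rw [show (Finset.univ : Finset (QuaternionGroup 2)) =
      {a 0, a 1, a 2, a 3, xa 0, xa 1, xa 2, xa 3} by decide]
  simp +decide [Finset.sum_insert, add_assoc]

lemma ιQ8_mul (g h : QuaternionGroup 2) : ιQ8 g * ιQ8 h = ιQ8 (g * h) := (map_mul ιQ8 g h).symm

lemma one_eq_ιQ8 : (1 : Q8Ring) = ιQ8 (a 0) := by rw [a_zero, map_one]

lemma aug_ιQ8 (g : QuaternionGroup 2) : aug (ιQ8 g) = 1 := by simp [aug, ιQ8]

lemma gi_mul_gi : gi * gi = gj * gj := by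
  simp only [gi, gj, ιQ8_mul]
  exact congrArg ιQ8 (by decide)

lemma gi_mul_gj_mul_gi : gi * gj * gi = gj := by
  simp only [gi, gj, ιQ8_mul]
  exact congrArg ιQ8 (by decide)

lemma sum_ιQ8_mul (h : QuaternionGroup 2) : (∑ g, ιQ8 g) * ιQ8 h = ∑ g, ιQ8 g := by
  simp only [Finset.sum_mul, ιQ8_mul]
  exact Equiv.sum_comp (Equiv.mulRight h) ιQ8

lemma d0_apply (x y : Q8Ring) : d0 (x, y) = x * (gi - 1) + y * (gj - 1) := rfl

lemma d1_apply (x y : Q8Ring) :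
    d1 (x, y) = (x * (1 + gi) + y * (1 + gi * gj), x * -(1 + gj) + y * (gi - 1)) := rfl

lemma d2_apply (x : Q8Ring) : d2 x = (x * (gi - 1), x * (1 - gi * gj)) := rfl

lemma d3_apply (x : Q8Ring) : d3 x = x * ∑ g, ιQ8 g := rfl

lemma aug_d0_eq_zero (x : Q8Ring × Q8Ring) : aug (d0 x) = 0 := by
  obtain ⟨p, q⟩ := x
  simp [d0_apply, gi, gj, aug_ιQ8]

lemma d0_d1_eq_zero (x : Q8Ring × Q8Ring) : d0 (d1 x) = 0 := by
  obtain ⟨p, q⟩ := x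
  calc d0 (d1 (p, q)) = p * (gi * gi - gj * gj) + q * (gi * gj * gi - gj) := by
        rw [d1_apply, d0_apply]; noncomm_ring
    _ = 0 := by rw [gi_mul_gi, gi_mul_gj_mul_gi]; simp

lemma d1_d2_eq_zero (x : Q8Ring) : d1 (d2 x) = 0 := by
  calc d1 (d2 x) = (x * (gi * gi - gi * gj * gi * gj), x * (gj - gi * gj * gi)) := by
        rw [d2_apply, d1_apply]; refine Prod.ext ?_ ?_ <;> noncomm_ring
    _ = 0 := by rw [gi_mul_gj_mul_gi, gi_mul_gi]; simp

lemma d2_d3_eq_zero (x : Q8Ring) : d2 (d3 x) = 0 := by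
  simp only [d3_apply, d2_apply, mul_assoc, mul_sub, mul_one, gi, gj, ιQ8_mul, sum_ιQ8_mul,
    sub_self, Prod.mk_zero_zero]

def onBasis {M : Type*} [AddCommGroup M] (v : QuaternionGroup 2 → M) : Q8Ring →ₗ[ℤ] M :=
  (MonoidAlgebra.basis (QuaternionGroup 2) ℤ).constr ℤ v

lemma onBasis_ιQ8 {M : Type*} [AddCommGroup M] (v : QuaternionGroup 2 → M)
    (g : QuaternionGroup 2) : onBasis v (ιQ8 g) = v g :=
  (MonoidAlgebra.basis (QuaternionGroup 2) ℤ).constr_basis ℤ v g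

lemma Q8Ring.lhom_ext {M : Type*} [AddCommGroup M] {φ ψ : Q8Ring →ₗ[ℤ] M}
    (h : ∀ g, φ (ιQ8 g) = ψ (ιQ8 g)) : φ = ψ :=
  (MonoidAlgebra.basis (QuaternionGroup 2) ℤ).ext h

/- In `QuaternionGroup 2`, `a k = i ^ k` and `xa k = j * i ^ k`. `s0` is the standard
contraction `i ^ k ↦ (1 + i + ⋯ + i ^ (k-1)) b₁`, `j i ^ k ↦ j (1 + i + ⋯ + i ^ (k-1)) b₁ + b₂`;
`s1`, `s2`, `s3` are one choice of `d`-preimages of `id - s d` on the basis elements. -/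
def s0 : Q8Ring →ₗ[ℤ] Q8Ring × Q8Ring := onBasis fun g =>
  if g = a 1 then (1, 0) else
  if g = a 2 then (1 + ιQ8 (a 1), 0) else
  if g = a 3 then (1 + ιQ8 (a 1) + ιQ8 (a 2), 0) else
  if g = xa 0 then (0, 1) else
  if g = xa 1 then (ιQ8 (xa 0), 1) else
  if g = xa 2 then (ιQ8 (xa 0) + ιQ8 (xa 1), 1) else
  if g = xa 3 then (ιQ8 (xa 0) + ιQ8 (xa 1) + ιQ8 (xa 2), 1) else 0

def s1 : Q8Ring × Q8Ring →ₗ[ℤ] Q8Ring × Q8Ring :=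
  (onBasis fun g =>
    if g = a 3 then (ιQ8 (a 2) - ιQ8 (xa 2), 1 + ιQ8 (a 1)) else
    if g = xa 3 then (-1 + ιQ8 (xa 0), 1 + ιQ8 (a 1)) else 0).coprod
  (onBasis fun g =>
    if g = a 1 then (1 - ιQ8 (xa 0), -ιQ8 (a 1)) else
    if g = a 2 then (1 - ιQ8 (xa 0), 0) else
    if g = a 3 then (ιQ8 (a 1) - ιQ8 (xa 3), 1) else
    if g = xa 0 then (-1, 0) else
    if g = xa 1 then (-1 + ιQ8 (xa 0) - ιQ8 (xa 1), ιQ8 (a 1)) else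
    if g = xa 2 then (-1 + ιQ8 (xa 0) - ιQ8 (xa 2), 1 + ιQ8 (a 1)) else
    if g = xa 3 then (-1 - ιQ8 (a 1) + ιQ8 (xa 0), ιQ8 (a 1)) else 0)

def s2 : Q8Ring × Q8Ring →ₗ[ℤ] Q8Ring :=
  (onBasis fun g =>
    if g = a 3 then -ιQ8 (a 1) - ιQ8 (a 3) - ιQ8 (xa 0) - ιQ8 (xa 2) else 0).coprod
  (onBasis fun g =>
    if g = a 2 then ιQ8 (a 1) + ιQ8 (a 2) + ιQ8 (a 3) + ιQ8 (xa 0) + ιQ8 (xa 1) + ιQ8 (xa 2) else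
    if g = a 3 then -ιQ8 (a 1) - ιQ8 (xa 2) else
    if g = xa 0 then ιQ8 (xa 0) else
    if g = xa 1 then ιQ8 (xa 1) else
    if g = xa 2 then -ιQ8 (a 1) else
    if g = xa 3 then -1 else 0)

def s3 : Q8Ring →ₗ[ℤ] Q8Ring := onBasis fun g => if g = xa 3 then 1 else 0

lemma d0_s0_add_aug :
    d0.restrictScalars ℤ ∘ₗ s0 + Algebra.linearMap ℤ Q8Ring ∘ₗ aug.toLinearMap = LinearMap.id := by
  refine Q8Ring.lhom_ext fun g => ?_
  obtain rfl | rfl | rfl | rfl | rfl | rfl | rfl | rfl := g.eq_cases_two <;>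
  simp +decide only [s0, LinearMap.add_apply, LinearMap.comp_apply,
    LinearMap.coe_restrictScalars, LinearMap.id_apply, AlgHom.toLinearMap_apply,
    Algebra.linearMap_apply, aug_ιQ8, map_one, onBasis_ιQ8, if_true, if_false, d0_apply, gi, gj,
    map_zero, one_eq_ιQ8, mul_sub, add_mul, zero_mul, ιQ8_mul, a_mul_a, a_mul_xa, xa_mul_a] <;>
  reduce_mod_char <;> abel

lemma d1_s1_add_s0_d0 :
    d1.restrictScalars ℤ ∘ₗ s1 + s0 ∘ₗ d0.restrictScalars ℤ = LinearMap.id := by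
  refine LinearMap.prod_ext (Q8Ring.lhom_ext fun g => ?_) (Q8Ring.lhom_ext fun g => ?_) <;>
  obtain rfl | rfl | rfl | rfl | rfl | rfl | rfl | rfl := g.eq_cases_two <;>
  simp +decide only [s0, s1, LinearMap.add_apply, LinearMap.comp_apply,
    LinearMap.coe_restrictScalars, LinearMap.id_apply, LinearMap.inl_apply, LinearMap.inr_apply,
    LinearMap.coprod_apply, onBasis_ιQ8, if_true, if_false, d0_apply, d1_apply, gi, gj,
    map_add, map_sub, map_zero, one_eq_ιQ8, mul_add, mul_sub, mul_neg, add_mul, sub_mul,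
    neg_mul, zero_mul, ιQ8_mul, a_mul_a, a_mul_xa, xa_mul_a, xa_mul_xa, Prod.ext_iff,
    Prod.fst_add, Prod.snd_add, Prod.fst_sub, Prod.snd_sub, Prod.fst_zero, Prod.snd_zero] <;>
  reduce_mod_char <;> constructor <;> first | trivial | abel

lemma d2_s2_add_s1_d1 :
    d2.restrictScalars ℤ ∘ₗ s2 + s1 ∘ₗ d1.restrictScalars ℤ = LinearMap.id := by
  refine LinearMap.prod_ext (Q8Ring.lhom_ext fun g => ?_) (Q8Ring.lhom_ext fun g => ?_) <;>
  obtain rfl | rfl | rfl | rfl | rfl | rfl | rfl | rfl := g.eq_cases_two <;>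
  simp +decide only [s1, s2, LinearMap.add_apply, LinearMap.comp_apply,
    LinearMap.coe_restrictScalars, LinearMap.id_apply, LinearMap.inl_apply, LinearMap.inr_apply,
    LinearMap.coprod_apply, onBasis_ιQ8, if_true, if_false, d1_apply, d2_apply, gi, gj,
    map_add, map_sub, map_neg, map_zero, one_eq_ιQ8, mul_add, mul_sub, mul_neg, zero_mul, ιQ8_mul,
    a_mul_a, a_mul_xa, xa_mul_a, xa_mul_xa, Prod.ext_iff, Prod.fst_add, Prod.snd_add,
    Prod.fst_neg, Prod.snd_neg, Prod.fst_sub, Prod.snd_sub, Prod.fst_zero, Prod.snd_zero] <;>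
  reduce_mod_char <;> constructor <;> first | trivial | abel

lemma d3_s3_add_s2_d2 :
    d3.restrictScalars ℤ ∘ₗ s3 + s2 ∘ₗ d2.restrictScalars ℤ = LinearMap.id := by
  refine Q8Ring.lhom_ext fun g => ?_
  obtain rfl | rfl | rfl | rfl | rfl | rfl | rfl | rfl := g.eq_cases_two <;>
  simp +decide only [s2, s3, LinearMap.add_apply, LinearMap.comp_apply,
    LinearMap.coe_restrictScalars, LinearMap.id_apply, LinearMap.coprod_apply, onBasis_ιQ8,
    if_true, if_false, d2_apply, d3_apply, QuaternionGroup.sum_univ_two, gi, gj, map_sub,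
    map_zero, one_eq_ιQ8, mul_add, mul_sub, ιQ8_mul, a_mul_a, a_mul_xa, xa_mul_a, xa_mul_xa] <;>
  reduce_mod_char <;> abel

/-- The sequence `0 ← ℤ ← X₀ ← X₁ ← X₂ ← X₃ ← X₄` of (free) `ℤ[Q₈]`-modules, with the
differentials `d₀, d₁, d₂, d₃` and the augmentation described above, is exact. -/
theorem q8_resolution_exact :
    Function.Surjective aug ∧
    (∀ x : Q8Ring, aug x = 0 ↔ x ∈ LinearMap.range d0) ∧
    (∀ x : Q8Ring × Q8Ring, d0 x = 0 ↔ x ∈ LinearMap.range d1) ∧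
    (∀ x : Q8Ring × Q8Ring, d1 x = 0 ↔ x ∈ LinearMap.range d2) ∧
    (∀ x : Q8Ring, d2 x = 0 ↔ x ∈ LinearMap.range d3) :=
  ⟨fun n => ⟨algebraMap ℤ Q8Ring n, aug.commutes n⟩,
    LinearMap.exact_of_homotopy s0 (Algebra.linearMap ℤ Q8Ring) d0_s0_add_aug aug_d0_eq_zero,
    LinearMap.exact_of_homotopy (R := ℤ) s1 s0 d1_s1_add_s0_d0 d0_d1_eq_zero,
    LinearMap.exact_of_homotopy (R := ℤ) s2 s1 d2_s2_add_s1_d1 d1_d2_eq_zero,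
    LinearMap.exact_of_homotopy (R := ℤ) s3 s2 d3_s3_add_s2_d2 d2_d3_eq_zero⟩

end
end

section
/- Let W be the ring of Witt vectors W(𝔽_4), viewed as containing a primitive cube root of unity ζ, and let Q8 act on the polynomial ring W[v_1, u^{-1}] by the formulas: i_*(u^{-1}) = (v_1 - u^{-1})/(ζ² - ζ), i_*(v_1) = (v_1 + 2u^{-1})/(ζ² - ζ), j_*(u^{-1}) = (ζv_1 - u^{-1})/(ζ² - ζ), j_*(v_1) = (v_1 + 2ζ²u^{-1})/(ζ² - ζ). Then the element D = ∏_{g ∈ Q8/C_2} g_*(u^{-1}) = u^{-1} · i_*(u^{-1}) · j_*(u^{-1}) · k_*(u^{-1}) is Q8-invariant. -/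
noncomputable section

/-- The ring of 2-typical Witt vectors `𝕎(𝔽₄)`. -/
abbrev W4 : Type := WittVector 2 (GaloisField 2 2)

/-- The ring `W(𝔽₄)[v₁, u⁻¹]`, a polynomial ring in two variables over `𝕎(𝔽₄)`:
`X 0` is `u⁻¹` and `X 1` is `v₁`. -/
abbrev R9 : Type := MvPolynomial (Fin 2) W4

open MvPolynomial

/-!
Write `ℓ_c = ε (c v₁ - u⁻¹)`, so that `D = u⁻¹ ℓ_1 ℓ_ζ ℓ_{ζ²}`. Each `g ∈ {i, j, k}` fixes `ζ` and `ε`,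
sends `u⁻¹` to `ℓ_a` for a cube root of unity `a`, and hence maps `ℓ_c` to
`ε² ((c - a) v₁ + (2c/a + 1) u⁻¹)`. Using `3ε² = -1`, `ε(2ζ + 1) = -1` and `ε(ζ - 1) = ζ²`, this gives
`u⁻¹ ↦ ℓ_a ↦ -u⁻¹` and `ℓ_{aζ} ↦ ℓ_{aζ²} ↦ -ℓ_{aζ}`, so `g` permutes the four factors of `D` with
two sign changes and fixes `D`.
-/

namespace Q8Invariant

variable {S : Type*} [CommRing S] {z e : S}

/-- `ℓ_c`, with `u, v, e` standing for `u⁻¹, v₁, ε`. -/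
def linForm (e u v c : S) : S := e * (c * v - u)

theorem map_linForm {F : Type*} [FunLike F S S] [RingHomClass F S S] (f : F) {u v c : S}
    (hfe : f e = e) (hfc : f c = c) :
    f (linForm e u v c) = linForm e (f u) (f v) c := by
  simp only [linForm, map_mul, map_sub, hfe, hfc]

section Scalars

variable (hz : z ^ 2 + z + 1 = 0) (he : (z ^ 2 - z) * e = 1)
include hz he

theorem three_mul_sq_eq_neg_one : 3 * e ^ 2 = -1 := by
  linear_combination (e ^ 2 * (z ^ 2 - 3 * z + 3)) * hz - ((z ^ 2 - z) * e + 1) * he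

theorem mul_two_mul_add_one_eq_neg_one : e * (2 * z + 1) = -1 := by
  linear_combination e * hz - he

theorem mul_two_mul_sq_add_one_eq_one : e * (2 * z ^ 2 + 1) = 1 := by
  linear_combination e * hz + he

theorem mul_sub_one_eq_sq : e * (z - 1) = z ^ 2 := by
  linear_combination (-(e * (z - 1) ^ 2)) * hz + z ^ 2 * he

theorem mul_sq_sub_one_eq_neg : e * (z ^ 2 - 1) = -z := by
  linear_combination (e * (z - 1)) * hz - z * he

end Scalars

section Action

variable {F : Type*} [FunLike F S S] [RingHomClass F S S] {f : F} {a b u v : S}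
  (hz : z ^ 2 + z + 1 = 0) (he : (z ^ 2 - z) * e = 1) (hab : a * b = 1)
  (hfu : f u = linForm e u v a) (hfv : f v = e * (v + 2 * b * u))

include hz he hab hfu hfv

theorem map_linForm_self (hfe : f e = e) (hfa : f a = a) : f (linForm e u v a) = -u := by
  rw [map_linForm f hfe hfa, hfu, hfv]
  unfold linForm
  linear_combination (2 * e ^ 2 * u) * hab + u * three_mul_sq_eq_neg_one hz he

theorem map_linForm_mul (hfe : f e = e) (hfc : f (a * z) = a * z) :
    f (linForm e u v (a * z)) = linForm e u v (a * z ^ 2) := by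
  rw [map_linForm f hfe hfc, hfu, hfv]
  unfold linForm
  linear_combination (a * e * v) * mul_sub_one_eq_sq hz he +
    (e * u) * mul_two_mul_add_one_eq_neg_one hz he + (2 * e ^ 2 * z * u) * hab

theorem map_linForm_mul_sq (hfe : f e = e) (hfc : f (a * z ^ 2) = a * z ^ 2) :
    f (linForm e u v (a * z ^ 2)) = -linForm e u v (a * z) := by
  rw [map_linForm f hfe hfc, hfu, hfv]
  unfold linForm
  linear_combination (a * e * v) * mul_sq_sub_one_eq_neg hz he +
    (e * u) * mul_two_mul_sq_add_one_eq_one hz he + (2 * e ^ 2 * z ^ 2 * u) * hab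

theorem map_orbitProd (hfe : f e = e) (hfz : f z = z) (hfa : f a = a) :
    f (u * linForm e u v a * linForm e u v (a * z) * linForm e u v (a * z ^ 2)) =
      u * linForm e u v a * linForm e u v (a * z) * linForm e u v (a * z ^ 2) := by
  have hfaz : f (a * z) = a * z := by rw [map_mul, hfa, hfz]
  have hfazz : f (a * z ^ 2) = a * z ^ 2 := by rw [map_mul, map_pow, hfa, hfz]
  rw [map_mul, map_mul, map_mul, hfu, map_linForm_self hz he hab hfu hfv hfe hfa,
    map_linForm_mul hz he hab hfu hfv hfe hfaz, map_linForm_mul_sq hz he hab hfu hfv hfe hfazz]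
  ring

end Action

theorem pow_three_eq_one (hz : z ^ 2 + z + 1 = 0) : z ^ 3 = 1 := by
  linear_combination (z - 1) * hz

theorem orbitProd_rotate (hz : z ^ 2 + z + 1 = 0) (u v : S) {a : S}
    (ha : a = 1 ∨ a = z ∨ a = z ^ 2) :
    u * linForm e u v a * linForm e u v (a * z) * linForm e u v (a * z ^ 2) =
      u * linForm e u v 1 * linForm e u v z * linForm e u v (z ^ 2) := by
  have hz3 := pow_three_eq_one hz
  rcases ha with ha | ha | ha <;> subst a
  · simp only [one_mul]
  · rw [show z * z = z ^ 2 by ring, show z * z ^ 2 = 1 by linear_combination hz3]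
    ring
  · rw [show z ^ 2 * z = 1 by linear_combination hz3, show z ^ 2 * z ^ 2 = z by
      linear_combination z * hz3]
    ring

end Q8Invariant

open Q8Invariant

/-- Let `ζ ∈ 𝕎(𝔽₄)` be a primitive third root of unity and `ε` the inverse of `ζ² - ζ`,
and let `Q₈` act `W`-linearly on `W(𝔽₄)[v₁, u⁻¹]` via the ring maps `iH`, `jH`, `kH`
(for the elements `i`, `j`, `k = ij`) determined by
`i(u⁻¹) = (v₁ - u⁻¹)/(ζ²-ζ)`, `i(v₁) = (v₁ + 2u⁻¹)/(ζ²-ζ)`,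
`j(u⁻¹) = (ζv₁ - u⁻¹)/(ζ²-ζ)`, `j(v₁) = (v₁ + 2ζ²u⁻¹)/(ζ²-ζ)`,
`k(u⁻¹) = (ζ²v₁ - u⁻¹)/(ζ²-ζ)`, `k(v₁) = (v₁ + 2ζu⁻¹)/(ζ²-ζ)`.
Then `D = u⁻¹ · i(u⁻¹) · j(u⁻¹) · k(u⁻¹)` is `Q₈`-invariant. -/
theorem D_is_Q8_invariant
    (ζ ε : W4) (hζ : ζ ^ 2 + ζ + 1 = 0) (hε : (ζ ^ 2 - ζ) * ε = 1)
    (iH jH kH : R9 →ₐ[W4] R9)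
    (hi0 : iH (X 0) = C ε * (X 1 - X 0))
    (hi1 : iH (X 1) = C ε * (X 1 + 2 * X 0))
    (hj0 : jH (X 0) = C ε * (C ζ * X 1 - X 0))
    (hj1 : jH (X 1) = C ε * (X 1 + 2 * C (ζ ^ 2) * X 0))
    (hk0 : kH (X 0) = C ε * (C (ζ ^ 2) * X 1 - X 0))
    (hk1 : kH (X 1) = C ε * (X 1 + 2 * C ζ * X 0)) :
    iH (X 0 * iH (X 0) * jH (X 0) * kH (X 0)) = X 0 * iH (X 0) * jH (X 0) * kH (X 0) ∧
    jH (X 0 * iH (X 0) * jH (X 0) * kH (X 0)) = X 0 * iH (X 0) * jH (X 0) * kH (X 0) ∧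
    kH (X 0 * iH (X 0) * jH (X 0) * kH (X 0)) = X 0 * iH (X 0) * jH (X 0) * kH (X 0) := by
  have hz : (C ζ : R9) ^ 2 + C ζ + 1 = 0 := by simpa using congrArg C hζ
  have he : ((C ζ : R9) ^ 2 - C ζ) * C ε = 1 := by simpa using congrArg C hε
  have hC (f : R9 →ₐ[W4] R9) (x : W4) : f (C x) = C x := f.commutes x
  have hD : X 0 * iH (X 0) * jH (X 0) * kH (X 0) =
      X 0 * linForm (C ε) (X 0) (X 1) 1 * linForm (C ε) (X 0) (X 1) (C ζ) *
        linForm (C ε) (X 0) (X 1) (C ζ ^ 2) := by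
    rw [hi0, hj0, hk0, linForm, linForm, linForm, one_mul, map_pow]
  rw [hD]
  have hz3 : (C ζ : R9) ^ 3 = 1 := pow_three_eq_one hz
  refine ⟨?_, ?_, ?_⟩
  · rw [← orbitProd_rotate hz _ _ (Or.inl rfl)]
    exact map_orbitProd hz he (mul_one 1) (by rw [hi0, linForm, one_mul]) (by rw [hi1, mul_one])
      (hC _ _) (hC _ _) (map_one _)
  · rw [← orbitProd_rotate hz _ _ (Or.inr (Or.inl rfl))]
    exact map_orbitProd (b := C ζ ^ 2) hz he (by rw [← hz3]; ring) hj0 (by rw [hj1, map_pow])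
      (hC _ _) (hC _ _) (hC _ _)
  · rw [← orbitProd_rotate hz _ _ (Or.inr (Or.inr rfl))]
    exact map_orbitProd (b := C ζ) hz he (by rw [← hz3]; ring) (by rw [hk0, map_pow]; rfl) hk1
      (hC _ _) (hC _ _) (by rw [map_pow, hC])

end
end

section
/- With the Q8-action on W[v_1, u^{-1}] defined by the formulas i_*(v_1) = (v_1 + 2u^{-1})/(ζ²-ζ), j_*(v_1) = (v_1 + 2ζ²u^{-1})/(ζ²-ζ), k_*(v_1) = (v_1 + 2ζu^{-1})/(ζ²-ζ), the norm N_{C_2}^{Q8}(v_1) = v_1 · i_*(v_1) · j_*(v_1) · k_*(v_1) is congruent to v_1^4 modulo 2. In particular, the ideal J = (2, v_1^4) of W[v_1, u^{-1}] is Q8-invariant. -/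
/-!
Modulo `2` each of `i(v₁)`, `j(v₁)`, `k(v₁)` is `ε v₁` with `ε = (ζ² - ζ)⁻¹`, and `ε ≡ 1` because
`ζ² - ζ = -1 - 2ζ`. Hence the norm is `≡ ε³ v₁⁴ ≡ v₁⁴`, and each of `i, j, k` maps `v₁⁴` to
`ε⁴ v₁⁴` modulo `2`, so it preserves `(2, v₁⁴)`.
-/

noncomputable section

/-- The ring `W(𝔽₄)[v₁, u⁻¹]`: `X 0` is `u⁻¹` and `X 1` is `v₁`. -/
abbrev R10 : Type := MvPolynomial (Fin 2) W4

open MvPolynomial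

section ModTwo

variable {A : Type*} [CommRing A]

lemma mul_add_two_mul_smodEq (a x t : A) :
    a * (x + 2 * t) ≡ a * x [SMOD Ideal.span {(2 : A)}] := by
  rw [SModEq.sub_mem, mul_add, add_sub_cancel_left, mul_left_comm]
  exact Ideal.mul_mem_right _ _ (Ideal.mem_span_singleton_self 2)

lemma smodEq_one_of_sq_sub_self_mul_eq_one {ζ ε : A} (hζ : ζ ^ 2 + ζ + 1 = 0)
    (hε : (ζ ^ 2 - ζ) * ε = 1) : ε ≡ 1 [SMOD Ideal.span {(2 : A)}] := by
  rw [SModEq.sub_mem, show ε - 1 = 2 * (-1 - ζ * ε) by linear_combination (-1) * hε + ε * hζ]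
  exact Ideal.mul_mem_right _ _ (Ideal.mem_span_singleton_self 2)

lemma mul_prod_three_smodEq_pow_four {a v t₁ t₂ t₃ : A}
    (ha : a ≡ 1 [SMOD Ideal.span {(2 : A)}]) :
    v * (a * (v + 2 * t₁)) * (a * (v + 2 * t₂)) * (a * (v + 2 * t₃)) ≡ v ^ 4
      [SMOD Ideal.span {(2 : A)}] := by
  have hv (t : A) : a * (v + 2 * t) ≡ v [SMOD Ideal.span {(2 : A)}] := by
    simpa using (mul_add_two_mul_smodEq a v t).trans (ha.mul SModEq.rfl)
  calc v * (a * (v + 2 * t₁)) * (a * (v + 2 * t₂)) * (a * (v + 2 * t₃))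
      ≡ v * v * v * v [SMOD Ideal.span {(2 : A)}] :=
        ((SModEq.rfl.mul (hv t₁)).mul (hv t₂)).mul (hv t₃)
    _ = v ^ 4 := by ring

lemma map_span_two_pow_le (f : A →+* A) {a x : A} (n : ℕ)
    (hx : f x ≡ a * x [SMOD Ideal.span {(2 : A)}]) :
    Ideal.map f (Ideal.span {2, x ^ n}) ≤ Ideal.span {2, x ^ n} := by
  have h2 : (2 : A) ∈ Ideal.span {2, x ^ n} := Ideal.subset_span (by simp)
  have hxn : x ^ n ∈ Ideal.span {2, x ^ n} := Ideal.subset_span (by simp)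
  have hfxn : f (x ^ n) - a ^ n * x ^ n ∈ Ideal.span {2, x ^ n} := by
    rw [map_pow, ← mul_pow, ← SModEq.sub_mem]
    exact (hx.pow n).mono (Ideal.span_mono (by simp))
  rw [Ideal.map_span, Ideal.span_le, Set.image_pair, Set.pair_subset_iff, map_ofNat]
  exact ⟨h2, by simpa using add_mem hfxn (Ideal.mul_mem_left _ (a ^ n) hxn)⟩

end ModTwo

theorem norm_v1_congruent_v1_pow_four_general
    (ζ ε : W4) (hζ : ζ ^ 2 + ζ + 1 = 0) (hε : (ζ ^ 2 - ζ) * ε = 1)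
    (iH jH kH : R10 →ₐ[W4] R10)
    (hi1 : iH (X 1) = C ε * (X 1 + 2 * X 0))
    (hj1 : jH (X 1) = C ε * (X 1 + 2 * C (ζ ^ 2) * X 0))
    (hk1 : kH (X 1) = C ε * (X 1 + 2 * C ζ * X 0)) :
    (∃ r : R10, X 1 * iH (X 1) * jH (X 1) * kH (X 1) = (X 1) ^ 4 + 2 * r) ∧
    Ideal.map iH.toRingHom (Ideal.span {(2 : R10), (X 1) ^ 4}) ≤
      Ideal.span {(2 : R10), (X 1) ^ 4} ∧
    Ideal.map jH.toRingHom (Ideal.span {(2 : R10), (X 1) ^ 4}) ≤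
      Ideal.span {(2 : R10), (X 1) ^ 4} ∧
    Ideal.map kH.toRingHom (Ideal.span {(2 : R10), (X 1) ^ 4}) ≤
      Ideal.span {(2 : R10), (X 1) ^ 4} := by
  rw [mul_assoc 2] at hj1 hk1
  have hCε : (C ε : R10) ≡ 1 [SMOD Ideal.span {(2 : R10)}] := by
    have hζ' : (C ζ : R10) ^ 2 + C ζ + 1 = 0 := by simpa using congrArg C hζ
    have hε' : ((C ζ : R10) ^ 2 - C ζ) * C ε = 1 := by simpa using congrArg C hε
    exact smodEq_one_of_sq_sub_self_mul_eq_one hζ' hε'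
  have hmap (f : R10 →ₐ[W4] R10) (t : R10) (hf : f (X 1) = C ε * (X 1 + 2 * t)) :
      Ideal.map f.toRingHom (Ideal.span {(2 : R10), X 1 ^ 4}) ≤ Ideal.span {2, X 1 ^ 4} :=
    map_span_two_pow_le _ 4 (a := C ε) (by
      rw [AlgHom.toRingHom_eq_coe, RingHom.coe_coe, hf]
      exact mul_add_two_mul_smodEq _ _ _)
  have hN : X 1 * iH (X 1) * jH (X 1) * kH (X 1) ≡ X 1 ^ 4 [SMOD Ideal.span {(2 : R10)}] := by
    rw [hi1, hj1, hk1]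
    exact mul_prod_three_smodEq_pow_four hCε
  obtain ⟨r, hr⟩ := Ideal.mem_span_singleton'.mp (SModEq.sub_mem.mp hN)
  exact ⟨⟨r, by linear_combination -hr⟩, hmap iH _ hi1, hmap jH _ hj1, hmap kH _ hk1⟩

/-- With the `Q₈`-action on `W(𝔽₄)[v₁, u⁻¹]` given by
`i(v₁) = (v₁ + 2u⁻¹)/(ζ²-ζ)`, `j(v₁) = (v₁ + 2ζ²u⁻¹)/(ζ²-ζ)`, `k(v₁) = (v₁ + 2ζu⁻¹)/(ζ²-ζ)`
(and the corresponding formulas on `u⁻¹`), the norm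
`N_{C₂}^{Q₈}(v₁) = v₁ · i(v₁) · j(v₁) · k(v₁)` is congruent to `v₁⁴` modulo `2`.
In particular, the ideal `J = (2, v₁⁴)` is `Q₈`-invariant. -/
theorem norm_v1_congruent_v1_pow_four
    (ζ ε : W4) (hζ : ζ ^ 2 + ζ + 1 = 0) (hε : (ζ ^ 2 - ζ) * ε = 1)
    (iH jH kH : R10 →ₐ[W4] R10)
    (hi0 : iH (X 0) = C ε * (X 1 - X 0))
    (hi1 : iH (X 1) = C ε * (X 1 + 2 * X 0))
    (hj0 : jH (X 0) = C ε * (C ζ * X 1 - X 0))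
    (hj1 : jH (X 1) = C ε * (X 1 + 2 * C (ζ ^ 2) * X 0))
    (hk0 : kH (X 0) = C ε * (C (ζ ^ 2) * X 1 - X 0))
    (hk1 : kH (X 1) = C ε * (X 1 + 2 * C ζ * X 0)) :
    (∃ r : R10, X 1 * iH (X 1) * jH (X 1) * kH (X 1) = (X 1) ^ 4 + 2 * r) ∧
    Ideal.map iH.toRingHom (Ideal.span {(2 : R10), (X 1) ^ 4}) ≤
      Ideal.span {(2 : R10), (X 1) ^ 4} ∧
    Ideal.map jH.toRingHom (Ideal.span {(2 : R10), (X 1) ^ 4}) ≤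
      Ideal.span {(2 : R10), (X 1) ^ 4} ∧
    Ideal.map kH.toRingHom (Ideal.span {(2 : R10), (X 1) ^ 4}) ≤
      Ideal.span {(2 : R10), (X 1) ^ 4} :=
  norm_v1_congruent_v1_pow_four_general ζ ε hζ hε iH jH kH hi1 hj1 hk1

end
end

section
/- Let W be a ring with 2 a non-zero-divisor and let ζ ∈ W satisfy ζ² + ζ + 1 = 0. Consider the free W-module M = W{s², st, t²} with the linear operators given (in the basis s², st, t²) by i_*(s²) = t², i_*(st) = -st, i_*(t²) = s², j_*(s²) = -ζs² + 2st - ζ²t², j_*(st) = s² + (2ζ+1)st - t², j_*(t²) = -ζ²s² - 2st - ζt². Then the intersection ker(i_* - 1) ∩ ker(j_* - 1) equals the free rank-one W-submodule generated by s² + t². -/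
/-!
The fixed vectors of `i_*` alone are already the multiples of `s² + t²`: the middle coordinate
satisfies `-x₁ = x₁`, which forces `x₁ = 0` since `2` is a non-zero-divisor. And `j_*` fixes
`s² + t²` because `ζ² + ζ + 1 = 0`.
-/

namespace Matrix

theorem mulVec_fin_three {α : Type*} [NonUnitalNonAssocSemiring α]
    (a₁₁ a₁₂ a₁₃ a₂₁ a₂₂ a₂₃ a₃₁ a₃₂ a₃₃ b₁ b₂ b₃ : α) :
    !![a₁₁, a₁₂, a₁₃; a₂₁, a₂₂, a₂₃; a₃₁, a₃₂, a₃₃] *ᵥ ![b₁, b₂, b₃] =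
      ![a₁₁ * b₁ + a₁₂ * b₂ + a₁₃ * b₃, a₂₁ * b₁ + a₂₂ * b₂ + a₂₃ * b₃,
        a₃₁ * b₁ + a₃₂ * b₂ + a₃₃ * b₃] := by
  simp only [cons_mulVec, vec3_dotProduct', empty_mulVec]

variable {W : Type*} [CommRing W]

theorem mem_ker_toLin'_sub_id {n : Type*} [Fintype n] [DecidableEq n] (A : Matrix n n W)
    (x : n → W) : x ∈ LinearMap.ker (toLin' A - LinearMap.id) ↔ A *ᵥ x = x := by
  rw [LinearMap.mem_ker, LinearMap.sub_apply, toLin'_apply, LinearMap.id_apply, sub_eq_zero]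

theorem ker_toLin'_swap_neg_sub_id (h2 : ∀ x : W, 2 * x = 0 → x = 0) :
    LinearMap.ker (toLin' (!![0, 0, 1; 0, -1, 0; 1, 0, 0] : Matrix (Fin 3) (Fin 3) W) -
      LinearMap.id) = Submodule.span W {![1, 0, 1]} := by
  ext x
  rw [mem_ker_toLin'_sub_id, Submodule.mem_span_singleton]
  obtain ⟨a, b, c, rfl⟩ : ∃ a b c, x = ![a, b, c] :=
    ⟨x 0, x 1, x 2, by ext i; fin_cases i <;> rfl⟩
  simp only [mulVec_fin_three, smul_vec3, vecCons_inj, zero_mul, one_mul, neg_one_mul, zero_add,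
    add_zero, smul_eq_mul, mul_one, mul_zero, and_true]
  constructor
  · rintro ⟨rfl, hb, -⟩
    exact ⟨c, rfl, (h2 b (by linear_combination -hb)).symm, rfl⟩
  · rintro ⟨r, rfl, rfl, rfl⟩
    simp

theorem mulVec_one_zero_one_of_sq_add_add_one_eq_zero {ζ : W} (hζ : ζ ^ 2 + ζ + 1 = 0) :
    (!![-ζ, 1, -(ζ ^ 2); 2, 2 * ζ + 1, -2; -(ζ ^ 2), -1, -ζ] : Matrix (Fin 3) (Fin 3) W) *ᵥ
      ![1, 0, 1] = ![1, 0, 1] := by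
  rw [mulVec_fin_three]
  refine vec3_eq ?_ ?_ ?_
  · linear_combination -hζ
  · ring
  · linear_combination -hζ

end Matrix

/-- Let `W` be a (commutative) ring in which `2` is a non-zero-divisor, with an element `ζ`
satisfying `ζ² + ζ + 1 = 0`.  On the free `W`-module `M = W{s², st, t²}` of rank 3
(coordinates indexed by the basis `s², st, t²`), consider the `W`-linear operators
`i_*` and `j_*` given by
`i_*(s²) = t²`, `i_*(st) = -st`, `i_*(t²) = s²`,
`j_*(s²) = -ζs² + 2st - ζ²t²`, `j_*(st) = s² + (2ζ+1)st - t²`, `j_*(t²) = -ζ²s² - 2st - ζt²`.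
Then `ker(i_* - 1) ∩ ker(j_* - 1)` is the free rank-one submodule generated by
`s² + t²` (the vector `![1,0,1]`). -/
theorem fixed_points_of_i_and_j
    {W : Type*} [CommRing W] (h2 : ∀ x : W, 2 * x = 0 → x = 0)
    (ζ : W) (hζ : ζ ^ 2 + ζ + 1 = 0) :
    (LinearMap.ker
        (Matrix.toLin' (!![0, 0, 1; 0, -1, 0; 1, 0, 0] : Matrix (Fin 3) (Fin 3) W) -
          LinearMap.id) ⊓
      LinearMap.ker
        (Matrix.toLin'
            (!![-ζ, 1, -(ζ ^ 2); 2, 2 * ζ + 1, -2; -(ζ ^ 2), -1, -ζ] :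
              Matrix (Fin 3) (Fin 3) W) -
          LinearMap.id)) =
      Submodule.span W {![1, 0, 1]} ∧
    Function.Injective (fun c : W => c • (![1, 0, 1] : Fin 3 → W)) := by
  refine ⟨?_, fun a b h => by simpa using congrFun h 0⟩
  rw [Matrix.ker_toLin'_swap_neg_sub_id h2, inf_eq_left, Submodule.span_singleton_le_iff_mem,
    Matrix.mem_ker_toLin'_sub_id]
  exact Matrix.mulVec_one_zero_one_of_sq_add_add_one_eq_zero hζ
end

section
/- With M = W{s², st, t²} and the operators i_*, j_* as in the preceding context, let d_3 : M → M be the 'sum over the group' map d_3 = Σ_{g ∈ Q8} g_* (where k = ij, and -1 acts as the identity on this even-degree module so each of 1, i, j, k contributes twice). Then d_3(s²) = 4(s² + t²), d_3(st) = 0, d_3(t²) = 4(s² + t²); hence the quotient of ker(i_*-1) ∩ ker(j_*-1) = W{s²+t²} by the image of d_3 is isomorphic to W/4. -/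
/-!
Modulo `ζ² + ζ + 1`, the group sum `2(1 + i_* + j_* + i_* j_*)` is the matrix with `4` in its four
corners, i.e. `y ↦ 4(y₀ + y₂)(s² + t²)`, so its image is `W · 4(s² + t²)`. The vectors fixed by
`i_*` are those with `y₂ = y₀` and `y₁ = -y₁`; on these the first row of `j_* - 1` reads
`y₁ - (ζ² + ζ + 1) y₀`, which forces `y₁ = 0` even where `2` is a zero divisor. So the invariants
are `W · (s² + t²)`, and since `s² + t²` is torsion-free the quotient is `W / 4`.
-/

noncomputable section

def Submodule.quotientSpanSingletonSMulEquiv {R M : Type*} [Ring R] [AddCommGroup M] [Module R M]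
    {v : M} (hv : Function.Injective (LinearMap.toSpanSingleton R M v)) (a : R) :
    (↥(R ∙ v) ⧸ Submodule.comap (R ∙ v).subtype (R ∙ (a • v))) ≃ₗ[R] R ⧸ Ideal.span {a} :=
  let e : R ≃ₗ[R] (R ∙ v) :=
    (LinearEquiv.ofInjective _ hv).trans
      (LinearEquiv.ofEq _ _ (LinearMap.span_singleton_eq_range R M v).symm)
  Submodule.Quotient.equiv _ _ e.symm <| by
    rw [Submodule.map_equiv_eq_comap_symm, LinearEquiv.symm_symm]
    ext c
    have he : (e c : M) = c • v := rfl
    simp only [Submodule.mem_comap, Submodule.mem_span_singleton, Submodule.subtype_apply,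
      LinearEquiv.coe_coe, he]
    refine exists_congr fun b => ?_
    rw [smul_smul]
    exact hv.eq_iff

namespace QuaternionAction

open Matrix

variable {R : Type*} [CommRing R]

-- Matrices of `i_*`, `j_*` and `d₃` in the basis `s², st, t²`; `fixedVector` is `s² + t²`.

variable (R) in
def iMatrix : Matrix (Fin 3) (Fin 3) R := !![0, 0, 1; 0, -1, 0; 1, 0, 0]

def jMatrix (ζ : R) : Matrix (Fin 3) (Fin 3) R :=
  !![-ζ, 1, -(ζ ^ 2); 2, 2 * ζ + 1, -2; -(ζ ^ 2), -1, -ζ]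

variable (R) in
def normMatrix : Matrix (Fin 3) (Fin 3) R := !![4, 0, 4; 0, 0, 0; 4, 0, 4]

variable (R) in
def fixedVector : Fin 3 → R := ![1, 0, 1]

theorem two_zsmul_sum_eq_normMatrix {ζ : R} (hζ : ζ ^ 2 + ζ + 1 = 0) :
    (2 : ℤ) • (1 + iMatrix R + jMatrix ζ + iMatrix R * jMatrix ζ) = normMatrix R := by
  ext i j
  fin_cases i <;> fin_cases j <;>
    simp [iMatrix, jMatrix, normMatrix] <;> grind

theorem normMatrix_mulVec (y : Fin 3 → R) :
    normMatrix R *ᵥ y = (y 0 + y 2) • (4 : R) • fixedVector R := by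
  ext i
  fin_cases i <;> simp [normMatrix, fixedVector, mulVec, dotProduct, Fin.sum_univ_three] <;> ring

theorem range_toLin'_normMatrix :
    LinearMap.range (Matrix.toLin' (normMatrix R)) = R ∙ ((4 : R) • fixedVector R) := by
  ext x
  simp only [LinearMap.mem_range, Matrix.toLin'_apply, normMatrix_mulVec,
    Submodule.mem_span_singleton]
  constructor
  · rintro ⟨y, rfl⟩
    exact ⟨_, rfl⟩
  · rintro ⟨a, rfl⟩
    exact ⟨![a, 0, 0], by simp⟩

theorem injective_toSpanSingleton_fixedVector :
    Function.Injective (LinearMap.toSpanSingleton R (Fin 3 → R) (fixedVector R)) := by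
  refine (injective_iff_map_eq_zero _).2 fun c hc => ?_
  simpa [fixedVector] using congrFun hc 0

theorem mem_ker_iMatrix_inf_ker_jMatrix_iff {ζ : R} (hζ : ζ ^ 2 + ζ + 1 = 0) (x : Fin 3 → R) :
    x ∈ LinearMap.ker (Matrix.toLin' (iMatrix R) - LinearMap.id) ⊓
        LinearMap.ker (Matrix.toLin' (jMatrix ζ) - LinearMap.id) ↔
      x 1 = 0 ∧ x 2 = x 0 := by
  simp only [Submodule.mem_inf, LinearMap.mem_ker, LinearMap.sub_apply, Matrix.toLin'_apply,
    LinearMap.id_apply, sub_eq_zero, funext_iff, Fin.forall_fin_succ]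
  simp only [mulVec, dotProduct, iMatrix, jMatrix, Fin.isValue, of_apply, cons_val',
    cons_val_fin_one, cons_val_zero, Fin.sum_univ_three, zero_mul, cons_val_one, add_zero,
    cons_val, one_mul, zero_add, Fin.succ_zero_eq_one, neg_mul, Fin.succ_one_eq_two,
    cons_val_succ, IsEmpty.forall_iff, and_true]
  constructor
  · rintro ⟨⟨h20, -, -⟩, h0, -, -⟩
    exact ⟨by linear_combination h0 + ζ ^ 2 * h20 + x 0 * hζ, h20⟩
  · rintro ⟨h1, h2⟩
    simp only [h1, h2]
    exact ⟨by simp, by linear_combination -x 0 * hζ, by ring, by linear_combination -x 0 * hζ⟩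

theorem ker_iMatrix_inf_ker_jMatrix {ζ : R} (hζ : ζ ^ 2 + ζ + 1 = 0) :
    LinearMap.ker (Matrix.toLin' (iMatrix R) - LinearMap.id) ⊓
        LinearMap.ker (Matrix.toLin' (jMatrix ζ) - LinearMap.id) = R ∙ fixedVector R := by
  ext x
  rw [mem_ker_iMatrix_inf_ker_jMatrix_iff hζ, Submodule.mem_span_singleton]
  constructor
  · rintro ⟨h1, h2⟩
    refine ⟨x 0, ?_⟩
    ext i; fin_cases i <;> simp [fixedVector, h1, h2]
  · rintro ⟨a, rfl⟩
    simp [fixedVector]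

end QuaternionAction

open QuaternionAction

/-- Let `ζ ∈ W = 𝕎(𝔽₄)` satisfy `ζ² + ζ + 1 = 0`, and let `i_*`, `j_*` be the operators on
`M = W{s², st, t²}` of the preceding setup (`i_*(s²) = t²`, `i_*(st) = -st`, `i_*(t²) = s²`;
`j_*(s²) = -ζs² + 2st - ζ²t²`, `j_*(st) = s² + (2ζ+1)st - t²`, `j_*(t²) = -ζ²s² - 2st - ζt²`),
with `k_* = i_* ∘ j_*`.  Let `d₃ = Σ_{g ∈ Q₈} g_* = 2(1 + i_* + j_* + k_*)` (the central
`-1` acts trivially on this even-degree module, so each of `1, i, j, k` contributes twice).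
Then `d₃(s²) = 4(s² + t²)`, `d₃(st) = 0`, `d₃(t²) = 4(s² + t²)`; hence the quotient of
`ker(i_* - 1) ∩ ker(j_* - 1) = W{s² + t²}` by the image of `d₃` is isomorphic to `W/4`.
(This establishes `H⁴(Q₈, π₄E₂ ⊗ σ_i) ≅ W/4`.) -/
theorem sum_over_group_map_and_quotient
    (ζ : W4) (hζ : ζ ^ 2 + ζ + 1 = 0)
    (iE jE N : (Fin 3 → W4) →ₗ[W4] (Fin 3 → W4))
    (hiE : iE = Matrix.toLin' (!![0, 0, 1; 0, -1, 0; 1, 0, 0] : Matrix (Fin 3) (Fin 3) W4))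
    (hjE : jE = Matrix.toLin'
      (!![-ζ, 1, -(ζ ^ 2); 2, 2 * ζ + 1, -2; -(ζ ^ 2), -1, -ζ] : Matrix (Fin 3) (Fin 3) W4))
    (hN : N = (2 : ℤ) • (LinearMap.id + iE + jE + iE ∘ₗ jE)) :
    N ![1, 0, 0] = ![4, 0, 4] ∧
    N ![0, 1, 0] = 0 ∧
    N ![0, 0, 1] = ![4, 0, 4] ∧
    Nonempty
      ((↥(LinearMap.ker (iE - LinearMap.id) ⊓ LinearMap.ker (jE - LinearMap.id)) ⧸
          Submodule.comap
            (LinearMap.ker (iE - LinearMap.id) ⊓ LinearMap.ker (jE - LinearMap.id)).subtype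
            (LinearMap.range N)) ≃ₗ[W4]
        W4 ⧸ Ideal.span {(4 : W4)}) := by
  change iE = Matrix.toLin' (iMatrix W4) at hiE
  change jE = Matrix.toLin' (jMatrix ζ) at hjE
  have hN' : N = Matrix.toLin' (normMatrix W4) := by
    rw [hN, hiE, hjE, ← two_zsmul_sum_eq_normMatrix hζ]
    simp only [map_zsmul, map_add, Matrix.toLin'_one, Matrix.toLin'_mul]
  subst hN'
  refine ⟨by simp [normMatrix_mulVec, fixedVector], by simp [normMatrix_mulVec],
    by simp [normMatrix_mulVec, fixedVector], ?_⟩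
  rw [hiE, hjE, ker_iMatrix_inf_ker_jMatrix hζ, range_toLin'_normMatrix]
  exact ⟨Submodule.quotientSpanSingletonSMulEquiv injective_toSpanSingleton_fixedVector 4⟩

end
end
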